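/- arXiv:1501.05319 — 2 statements merged into one kernel-verified Lean document; each statement's English description precedes it below -/
import Mathlib

section
/- For an odd prime p and B, B' ∈ Z_p with B ≠ B', the bases {|ψ_B^V⟩ : V ∈ Z_p} and {|ψ_{B'}^{V'}⟩ : V' ∈ Z_p} are mutually unbiased: |⟨ψ_B^V | ψ_{B'}^{V'}⟩| = 1/√p for all V, V' ∈ Z_p. -/
open Complex Matrix BigOperators Finset
open scoped Kronecker

noncomputable section

/-- Additive character `a ↦ exp(2πi a/p)` on `ZMod p`. -/
def chi (p : ℕ) (a : ZMod p) : ℂ := Complex.exp (2 * Real.pi * Complex.I * (a.val : ℂ) / p)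

/-- The shift operator `X : |j⟩ ↦ |j+1⟩`. -/
def Xop (p : ℕ) : Matrix (ZMod p) (ZMod p) ℂ := fun j k => if j = k + 1 then 1 else 0

/-- The clock operator `Z : |j⟩ ↦ ω^j |j⟩`. -/
def Zop (p : ℕ) : Matrix (ZMod p) (ZMod p) ℂ := Matrix.diagonal (fun j => chi p j)

/-- Weyl-Heisenberg displacement operator `D_(x|z) = ω^{2⁻¹ x z} X^x Z^z`. -/
def Dop (p : ℕ) [NeZero p] (x z : ZMod p) : Matrix (ZMod p) (ZMod p) ℂ :=
  chi p ((2 : ZMod p)⁻¹ * x * z) • (Xop p ^ x.val * Zop p ^ z.val)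

/-- The stabilizer MUB vector `|ψ_B^V⟩ = p^{-1/2} Σ_k ω^{2⁻¹ B k² - V k} |k⟩`. -/
def psi (p : ℕ) (B V : ZMod p) : ZMod p → ℂ :=
  fun k => ((Real.sqrt p : ℂ))⁻¹ * chi p ((2 : ZMod p)⁻¹ * B * k ^ 2 - V * k)

/-- The magic state `|f_{a,b,c}⟩ = p^{-1/2} Σ_k ω^{a k³ + b k² + c k} |k⟩`. -/
def magic (p : ℕ) (a b c : ZMod p) : ZMod p → ℂ :=
  fun k => ((Real.sqrt p : ℂ))⁻¹ * chi p (a * k ^ 3 + b * k ^ 2 + c * k)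

/-- Rank-one projector `|v⟩⟨v|`. -/
def proj (p : ℕ) (v : ZMod p → ℂ) : Matrix (ZMod p) (ZMod p) ℂ :=
  fun i j => v i * (starRingEnd ℂ) (v j)

/-- The single-qudit operator `S = Σ_B |ψ_B^{-B(B+2⁻¹)}⟩⟨ψ_B^{-B(B+2⁻¹)}|`. -/
def Sop (p : ℕ) [NeZero p] : Matrix (ZMod p) (ZMod p) ℂ :=
  ∑ B : ZMod p, proj p (psi p B (-B * (B + (2 : ZMod p)⁻¹)))

/-!
Up to the factor `1/p`, the overlap is the quadratic exponential sum `T = Σ_k ω^{q k}` with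
`q k = c k² + d k`, `c = 2⁻¹ (B' - B) ≠ 0`. Expanding `|T|²` and substituting `x = y + m`, the
exponent `q (y + m) - q y = q m + 2 c m y` is linear in `y`, so summing over `y` kills every
`m ≠ 0` and leaves `|T|² = p`.
-/

namespace AddChar

variable {R : Type*} [CommRing R] [Fintype R] {ψ : AddChar R ℂ}

theorem norm_sum_quadratic_sq (hψ : ψ.IsPrimitive) {c : R} (hc : IsUnit (2 * c)) (d : R) :
    ‖∑ x, ψ (c * x ^ 2 + d * x)‖ ^ 2 = Fintype.card R := by
  classical
  set q : R → R := fun x => c * x ^ 2 + d * x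
  have q_shift (y m : R) : q (y + m) - q y = q m + y * (2 * c * m) := by simp only [q]; ring
  have h2c (m : R) : 2 * c * m = 0 ↔ m = 0 := hc.mul_right_eq_zero
  suffices (‖∑ x, ψ (q x)‖ ^ 2 : ℂ) = Fintype.card R by exact_mod_cast this
  calc (‖∑ x, ψ (q x)‖ ^ 2 : ℂ)
      = ∑ y, ∑ x, ψ (q x - q y) := by
        simp only [← conj_mul', map_sum, sum_mul, mul_sum, map_sub_eq_div, div_eq_mul_inv,
          inv_apply_eq_conj, mul_comm]
    _ = ∑ y, ∑ m, ψ (q (y + m) - q y) := by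
        refine sum_congr rfl fun y _ ↦ ?_
        exact (Fintype.sum_equiv (Equiv.addLeft y) _ _ fun m ↦ rfl).symm
    _ = ∑ m, ψ (q m) * ∑ y, ψ (y * (2 * c * m)) := by
        simp only [q_shift, map_add_eq_mul, mul_sum]
        exact sum_comm
    _ = Fintype.card R := by
        simp [sum_mulShift _ hψ, h2c, q]

theorem norm_sum_quadratic (hψ : ψ.IsPrimitive) {c : R} (hc : IsUnit (2 * c)) (d : R) :
    ‖∑ x, ψ (c * x ^ 2 + d * x)‖ = √(Fintype.card R) := by
  rw [← norm_sum_quadratic_sq hψ hc d, Real.sqrt_sq (norm_nonneg _)]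

end AddChar

lemma chi_eq_stdAddChar (p : ℕ) [NeZero p] (a : ZMod p) : chi p a = ZMod.stdAddChar a := by
  rw [ZMod.stdAddChar_apply, ZMod.toCircle_apply, chi]

lemma conj_psi_mul_psi (p : ℕ) [NeZero p] (B V B' V' k : ZMod p) :
    (starRingEnd ℂ) (psi p B V k) * psi p B' V' k
      = (p : ℂ)⁻¹ * ZMod.stdAddChar ((2 : ZMod p)⁻¹ * (B' - B) * k ^ 2 + (V - V') * k) := by
  rw [psi, psi, chi_eq_stdAddChar, chi_eq_stdAddChar, map_mul, map_inv₀, conj_ofReal,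
    ← AddChar.map_neg_eq_conj, mul_mul_mul_comm, ← AddChar.map_add_eq_mul, ← mul_inv,
    ← ofReal_mul, Real.mul_self_sqrt (Nat.cast_nonneg p), ofReal_natCast]
  congr 2
  ring

theorem stmt2 (p : ℕ) [Fact p.Prime] (hp2 : p ≠ 2) (B B' V V' : ZMod p) (hBB : B ≠ B') :
    ‖∑ k : ZMod p, (starRingEnd ℂ) (psi p B V k) * psi p B' V' k‖
      = 1 / Real.sqrt p := by
  have h2 : (2 : ZMod p) ≠ 0 := Ring.two_ne_zero (by rwa [ZMod.ringChar_zmod_n])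
  have hc : IsUnit (2 * ((2 : ZMod p)⁻¹ * (B' - B))) := by
    rw [← mul_assoc, mul_inv_cancel₀ h2, one_mul]
    exact (sub_ne_zero.2 hBB.symm).isUnit
  simp only [conj_psi_mul_psi, ← mul_sum, norm_mul,
    AddChar.norm_sum_quadratic (ZMod.isPrimitive_stdAddChar p) hc, ZMod.card]
  rw [norm_inv, Complex.norm_natCast, inv_mul_eq_div, Real.sqrt_div_self']
end
end

section
/- Let p > 3 be prime. For the magic state |f⟩ = |f_{-12^{-1}, -8^{-1}, c}⟩ and the operator S = Σ_{B∈Z_p} |ψ_B^{-B(B+2^{-1})}⟩⟨ψ_B^{-B(B+2^{-1})}|, one has ⟨f|S|f⟩ = p · |⟨+|f⟩|², where |+⟩ = p^{-1/2} Σ_k |k⟩. -/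
open Complex Matrix BigOperators Finset
open scoped Kronecker

noncomputable section

/-!
Since `conj (ψ_B^V k) · f_{a,b,c}(k) = p^{-1/2} · f_{a, b - B/2, c + V}(k)`, each overlap
`⟨ψ_B^V|f_{a,b,c}⟩` is an overlap `⟨+|f_{a,b',c'}⟩`. Translating `k ↦ k + t` changes the
coefficients of a cubic phase to `b + 3at`, `c + 3at² + 2bt` at the cost of a global phase.
For `a = -12⁻¹` and `t = -2B` this undoes `b ↦ b - B/2`, and `V = -B(B + 2⁻¹)` is exactly
the choice that then restores `c`. Hence all `p` summands of `⟨f|S|f⟩ = Σ_B |⟨ψ_B|f⟩|²` equal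
`|⟨+|f⟩|²`.
-/

section Character

variable {p : ℕ} [NeZero p]

theorem chi_eq_toCircle (a : ZMod p) : chi p a = ZMod.toCircle a := by
  rw [ZMod.toCircle_apply]
  rfl

theorem chi_add (a b : ZMod p) : chi p (a + b) = chi p a * chi p b := by
  simp only [chi_eq_toCircle, AddChar.map_add_eq_mul, Circle.coe_mul]

theorem conj_chi (a : ZMod p) : starRingEnd ℂ (chi p a) = chi p (-a) := by
  rw [chi_eq_toCircle, chi_eq_toCircle, AddChar.map_neg_eq_inv, Circle.coe_inv_eq_conj]

theorem norm_chi (a : ZMod p) : ‖chi p a‖ = 1 := by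
  rw [chi_eq_toCircle]
  exact Circle.norm_coe _

end Character

def plusVec (p : ℕ) : ZMod p → ℂ := fun _ => (Real.sqrt p : ℂ)⁻¹

section Overlaps

variable {p : ℕ} [NeZero p]

theorem star_psi_mul_magic (B V a b c k : ZMod p) :
    star (psi p B V k) * magic p a b c k
      = star (plusVec p k) * magic p a (b - 2⁻¹ * B) (c + V) k := by
  simp only [psi, magic, plusVec, Complex.star_def, map_mul, conj_chi]
  rw [mul_assoc, mul_left_comm (chi p _), ← chi_add]
  congr 3
  ring

theorem star_psi_dotProduct_magic (B V a b c : ZMod p) :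
    star (psi p B V) ⬝ᵥ magic p a b c
      = star (plusVec p) ⬝ᵥ magic p a (b - 2⁻¹ * B) (c + V) :=
  Finset.sum_congr rfl fun k _ => star_psi_mul_magic B V a b c k

theorem magic_add (a b c m t : ZMod p) :
    magic p a b c (m + t)
      = chi p (a * t ^ 3 + b * t ^ 2 + c * t) *
          magic p a (b + 3 * a * t) (c + 3 * a * t ^ 2 + 2 * b * t) m := by
  simp only [magic]
  rw [mul_left_comm, ← chi_add]
  congr 2
  ring

theorem star_plusVec_dotProduct_magic (a b c t : ZMod p) :
    star (plusVec p) ⬝ᵥ magic p a b c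
      = chi p (a * t ^ 3 + b * t ^ 2 + c * t) *
          (star (plusVec p) ⬝ᵥ magic p a (b + 3 * a * t) (c + 3 * a * t ^ 2 + 2 * b * t)) := by
  rw [dotProduct, ← Equiv.sum_comp (Equiv.addRight t), dotProduct, Finset.mul_sum]
  refine Finset.sum_congr rfl fun m _ => ?_
  rw [Equiv.coe_addRight, magic_add]
  simp only [plusVec, Pi.star_apply]
  ring

theorem star_dotProduct_proj_mulVec (v f : ZMod p → ℂ) :
    star f ⬝ᵥ (proj p v *ᵥ f) = (‖star v ⬝ᵥ f‖ : ℂ) ^ 2 := by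
  rw [show proj p v = vecMulVec v (star v) from rfl, vecMulVec_mulVec, dotProduct_smul,
    op_smul_eq_smul, smul_eq_mul, star_dotProduct (v := f), Complex.star_def, Complex.mul_conj']

theorem star_dotProduct_Sop_mulVec (f : ZMod p → ℂ) :
    star f ⬝ᵥ (Sop p *ᵥ f)
      = ∑ B : ZMod p, (‖star (psi p B (-B * (B + 2⁻¹))) ⬝ᵥ f‖ : ℂ) ^ 2 := by
  simp only [Sop, Matrix.sum_mulVec, dotProduct_sum, star_dotProduct_proj_mulVec]

end Overlaps

theorem natCast_ne_zero_of_lt {p n : ℕ} (hn : n ≠ 0) (h : n < p) : (n : ZMod p) ≠ 0 := by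
  intro h0
  have := congrArg ZMod.val h0
  rw [ZMod.val_natCast_of_lt h, ZMod.val_zero] at this
  exact hn this

theorem norm_star_psi_dotProduct_magic {p : ℕ} [Fact p.Prime] (hp3 : 3 < p) (B c : ZMod p) :
    ‖star (psi p B (-B * (B + 2⁻¹))) ⬝ᵥ magic p (-12⁻¹) (-8⁻¹) c‖
      = ‖star (plusVec p) ⬝ᵥ magic p (-12⁻¹) (-8⁻¹) c‖ := by
  have h2 : (2 : ZMod p) ≠ 0 := by exact_mod_cast natCast_ne_zero_of_lt two_ne_zero (by omega)
  have h3 : (3 : ZMod p) ≠ 0 := by exact_mod_cast natCast_ne_zero_of_lt three_ne_zero hp3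
  have h8 : (8 : ZMod p) ≠ 0 := by
    rw [show (8 : ZMod p) = 2 ^ 3 by norm_num]
    exact pow_ne_zero _ h2
  have h12 : (12 : ZMod p) ≠ 0 := by
    rw [show (12 : ZMod p) = 2 ^ 2 * 3 by norm_num]
    exact mul_ne_zero (pow_ne_zero _ h2) h3
  have hb : -8⁻¹ - 2⁻¹ * B + 3 * -12⁻¹ * (-2 * B) = (-8⁻¹ : ZMod p) := by
    field_simp
    ring
  have hc :
      c + -B * (B + 2⁻¹) + 3 * -12⁻¹ * (-2 * B) ^ 2 + 2 * (-8⁻¹ - 2⁻¹ * B) * (-2 * B) = c := by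
    field_simp
    ring
  rw [star_psi_dotProduct_magic, star_plusVec_dotProduct_magic (t := -2 * B), hb, hc, norm_mul,
    norm_chi, one_mul]

theorem stmt10 (p : ℕ) [Fact p.Prime] (hp3 : 3 < p) (c : ZMod p) :
    star (magic p (-(12 : ZMod p)⁻¹) (-(8 : ZMod p)⁻¹) c) ⬝ᵥ
        (Sop p *ᵥ magic p (-(12 : ZMod p)⁻¹) (-(8 : ZMod p)⁻¹) c)
      = (p : ℂ) * (‖(∑ k : ZMod p,
          (starRingEnd ℂ) (((Real.sqrt p : ℂ))⁻¹) *
            magic p (-(12 : ZMod p)⁻¹) (-(8 : ZMod p)⁻¹) c k)‖ : ℝ) ^ 2 := by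
  rw [star_dotProduct_Sop_mulVec]
  simp only [norm_star_psi_dotProduct_magic hp3]
  rw [Finset.sum_const, Finset.card_univ, ZMod.card, nsmul_eq_mul]
  rfl
end
end
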